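/- arXiv:2605.18626 — 9 statements merged into one kernel-verified Lean document; each statement's English description precedes it below -/
import Mathlib

section
/- Let k ∈ [0,1), and let x_l ≤ x_r < o < y_l ≤ y_r be real numbers in [0,1]. Define the cost of a left agent at x under edge (a,b) as |x-a| + k(b-a) + (1-b), and of a right agent at y as |y-b| + k(b-a) + a. If (a,b) with a ∈ [0,o), b ∈ (o,1] minimizes the maximum cost over the four agents at x_l, x_r, y_l, y_r, then a ≤ (x_l + x_r)/2 and b ≥ (y_l + y_r)/2. -/
/-- In any maximum-cost optimal edge `(a,b)`, `a ≤ (x_l+x_r)/2` and `b ≥ (y_l+y_r)/2`. -/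
theorem stmt_1 (k o xl xr yl yr a b : ℝ)
    (hk0 : 0 ≤ k) (hk1 : k < 1) (ho0 : 0 < o) (ho1 : o < 1)
    (hxl0 : 0 ≤ xl) (hxlr : xl ≤ xr) (hxro : xr < o)
    (hoyl : o < yl) (hylr : yl ≤ yr) (hyr1 : yr ≤ 1)
    (ha0 : 0 ≤ a) (hao : a < o) (hob : o < b) (hb1 : b ≤ 1)
    (hopt : ∀ a' b', 0 ≤ a' → a' < o → o < b' → b' ≤ 1 →
      max (max (|xl - a| + k * (b - a) + (1 - b)) (|xr - a| + k * (b - a) + (1 - b)))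
          (max (|yl - b| + k * (b - a) + a) (|yr - b| + k * (b - a) + a)) ≤
      max (max (|xl - a'| + k * (b' - a') + (1 - b')) (|xr - a'| + k * (b' - a') + (1 - b')))
          (max (|yl - b'| + k * (b' - a') + a') (|yr - b'| + k * (b' - a') + a'))) :
    a ≤ (xl + xr) / 2 ∧ b ≥ (yl + yr) / 2 := by
  constructor
  · by_contra h
    push_neg at h
    set m := (xl + xr) / 2 with hm
    have hxlm : xl ≤ m := by rw [hm]; linarith
    have hmxr : m ≤ xr := by rw [hm]; linarith
    have key := hopt m b (by linarith) (by linarith) hob hb1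
    have e1 : |xl - a| = a - xl := by rw [abs_sub_comm, abs_of_nonneg (by linarith)]
    have e2 : |xl - m| = m - xl := by rw [abs_sub_comm, abs_of_nonneg (by linarith)]
    have e3 : |xr - m| = xr - m := abs_of_nonneg (by linarith)
    have hgap : (1 - k) * (a - m) > 0 :=
      mul_pos (by linarith) (by linarith)
    have hlt : max (max (|xl - m| + k * (b - m) + (1 - b)) (|xr - m| + k * (b - m) + (1 - b)))
          (max (|yl - b| + k * (b - m) + m) (|yr - b| + k * (b - m) + m)) <
        max (max (|xl - a| + k * (b - a) + (1 - b)) (|xr - a| + k * (b - a) + (1 - b)))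
          (max (|yl - b| + k * (b - a) + a) (|yr - b| + k * (b - a) + a)) := by
      apply max_lt (max_lt ?_ ?_) (max_lt ?_ ?_)
      · refine lt_of_lt_of_le ?_ (le_trans (le_max_left _ _) (le_max_left _ _))
        rw [e1, e2]; nlinarith
      · refine lt_of_lt_of_le ?_ (le_trans (le_max_left _ _) (le_max_left _ _))
        rw [e1, e3]; nlinarith [hm]
      · refine lt_of_lt_of_le ?_ (le_trans (le_max_left _ _) (le_max_right _ _))
        nlinarith
      · refine lt_of_lt_of_le ?_ (le_trans (le_max_right _ _) (le_max_right _ _))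
        nlinarith
    linarith
  · by_contra h
    push_neg at h
    set n := (yl + yr) / 2 with hn
    have hyln : yl ≤ n := by rw [hn]; linarith
    have hnyr : n ≤ yr := by rw [hn]; linarith
    have key := hopt a n ha0 hao (by linarith) (by linarith)
    have e1 : |yr - b| = yr - b := abs_of_nonneg (by linarith)
    have e2 : |yr - n| = yr - n := abs_of_nonneg (by linarith)
    have e3 : |yl - n| = n - yl := by rw [abs_sub_comm, abs_of_nonneg (by linarith)]
    have hgap : (1 - k) * (n - b) > 0 :=
      mul_pos (by linarith) (by linarith)
    have hlt : max (max (|xl - a| + k * (n - a) + (1 - n)) (|xr - a| + k * (n - a) + (1 - n)))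
          (max (|yl - n| + k * (n - a) + a) (|yr - n| + k * (n - a) + a)) <
        max (max (|xl - a| + k * (b - a) + (1 - b)) (|xr - a| + k * (b - a) + (1 - b)))
          (max (|yl - b| + k * (b - a) + a) (|yr - b| + k * (b - a) + a)) := by
      apply max_lt (max_lt ?_ ?_) (max_lt ?_ ?_)
      · refine lt_of_lt_of_le ?_ (le_trans (le_max_left _ _) (le_max_left _ _))
        nlinarith
      · refine lt_of_lt_of_le ?_ (le_trans (le_max_right _ _) (le_max_left _ _))
        nlinarith
      · refine lt_of_lt_of_le ?_ (le_trans (le_max_right _ _) (le_max_right _ _))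
        rw [e1, e3]; nlinarith [hn]
      · refine lt_of_lt_of_le ?_ (le_trans (le_max_right _ _) (le_max_right _ _))
        rw [e1, e2]; nlinarith [hn]
    linarith
end

section
/- Let k ∈ [0,1), and let x_l ≤ x_r < o < y_l ≤ y_r in [0,1] with 1 - y_r ≥ x_l. Set a* = (x_l + x_r)/2 and b* = (y_l - x_l)/2 + 1/2. Then under edge (a*, b*), the costs of the agents at x_l, x_r, and y_l are all equal, and the cost of the agent at y_r is at most the cost of the agent at y_l; hence the maximum cost of (a*,b*) equals cost(a*,b*,x_l). -/
/-- Under the edge `(a*, b*) = ((x_l+x_r)/2, (y_l-x_l)/2 + 1/2)`, when `1 - y_r ≥ x_l`,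
the costs of the agents at `x_l`, `x_r`, `y_l` are all equal, the cost at `y_r` is at
most the cost at `y_l`, and hence the maximum cost equals the cost at `x_l`. -/
theorem stmt_3 (k o xl xr yl yr : ℝ)
    (hk0 : 0 ≤ k) (hk1 : k < 1) (ho0 : 0 < o) (ho1 : o < 1)
    (hxl0 : 0 ≤ xl) (hxlr : xl ≤ xr) (hxro : xr < o)
    (hoyl : o < yl) (hylr : yl ≤ yr) (hyr1 : yr ≤ 1)
    (hyx : 1 - yr ≥ xl)
    (ha : 0 ≤ (xl + xr) / 2 ∧ (xl + xr) / 2 < o)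
    (hb : o < (yl - xl) / 2 + 1 / 2 ∧ (yl - xl) / 2 + 1 / 2 ≤ 1) :
    (|xl - (xl + xr) / 2| + k * (((yl - xl) / 2 + 1 / 2) - (xl + xr) / 2)
        + (1 - ((yl - xl) / 2 + 1 / 2))
      = |xr - (xl + xr) / 2| + k * (((yl - xl) / 2 + 1 / 2) - (xl + xr) / 2)
        + (1 - ((yl - xl) / 2 + 1 / 2)))
    ∧ (|xl - (xl + xr) / 2| + k * (((yl - xl) / 2 + 1 / 2) - (xl + xr) / 2)
        + (1 - ((yl - xl) / 2 + 1 / 2))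
      = |yl - ((yl - xl) / 2 + 1 / 2)| + k * (((yl - xl) / 2 + 1 / 2) - (xl + xr) / 2)
        + (xl + xr) / 2)
    ∧ (|yr - ((yl - xl) / 2 + 1 / 2)| + k * (((yl - xl) / 2 + 1 / 2) - (xl + xr) / 2)
        + (xl + xr) / 2
      ≤ |yl - ((yl - xl) / 2 + 1 / 2)| + k * (((yl - xl) / 2 + 1 / 2) - (xl + xr) / 2)
        + (xl + xr) / 2)
    ∧ (max (max (|xl - (xl + xr) / 2| + k * (((yl - xl) / 2 + 1 / 2) - (xl + xr) / 2)
            + (1 - ((yl - xl) / 2 + 1 / 2)))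
          (|xr - (xl + xr) / 2| + k * (((yl - xl) / 2 + 1 / 2) - (xl + xr) / 2)
            + (1 - ((yl - xl) / 2 + 1 / 2))))
        (max (|yl - ((yl - xl) / 2 + 1 / 2)| + k * (((yl - xl) / 2 + 1 / 2) - (xl + xr) / 2)
            + (xl + xr) / 2)
          (|yr - ((yl - xl) / 2 + 1 / 2)| + k * (((yl - xl) / 2 + 1 / 2) - (xl + xr) / 2)
            + (xl + xr) / 2))
      = |xl - (xl + xr) / 2| + k * (((yl - xl) / 2 + 1 / 2) - (xl + xr) / 2)
        + (1 - ((yl - xl) / 2 + 1 / 2))) := by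
  have h1 : |xl - (xl + xr) / 2| = (xr - xl) / 2 := by
    rw [abs_of_nonpos (by linarith)]; ring
  have h2 : |xr - (xl + xr) / 2| = (xr - xl) / 2 := by
    rw [abs_of_nonneg (by linarith)]; ring
  have h3 : |yl - ((yl - xl) / 2 + 1 / 2)| = (1 - yl - xl) / 2 := by
    rw [abs_of_nonpos (by linarith)]; ring
  have h4 : |yr - ((yl - xl) / 2 + 1 / 2)| ≤ (1 - yl - xl) / 2 := by
    rw [abs_le]; constructor <;> linarith
  refine ⟨by rw [h1, h2], by rw [h1, h3]; ring, by rw [h3]; linarith, ?_⟩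
  rw [h1, h2, h3]
  have e1 : (1 - yl - xl) / 2 + k * ((yl - xl) / 2 + 1 / 2 - (xl + xr) / 2) + (xl + xr) / 2
      = (xr - xl) / 2 + k * ((yl - xl) / 2 + 1 / 2 - (xl + xr) / 2)
        + (1 - ((yl - xl) / 2 + 1 / 2)) := by ring
  have hD : |yr - ((yl - xl) / 2 + 1 / 2)| + k * ((yl - xl) / 2 + 1 / 2 - (xl + xr) / 2)
      + (xl + xr) / 2
      ≤ (xr - xl) / 2 + k * ((yl - xl) / 2 + 1 / 2 - (xl + xr) / 2)
        + (1 - ((yl - xl) / 2 + 1 / 2)) := by linarith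
  rw [e1, max_self, max_eq_left hD, max_self]
end

section
/- Let k ∈ [0,1), and let x_l ≤ x_r < o < y_l ≤ y_r in [0,1] with 1 - y_r ≥ x_l. Then the edge (a*,b*) with a* = (x_l+x_r)/2 and b* = (y_l - x_l)/2 + 1/2 minimizes the maximum cost over all edges (a,b) with a ∈ [0,o), b ∈ (o,1], and the optimal maximum cost equals 1/2 · [1 + (1-k)x_r + k(1-2x_l) - (1-k)y_l]. -/
set_option maxHeartbeats 1000000


/-- The edge `(a*,b*) = ((x_l+x_r)/2, (y_l-x_l)/2 + 1/2)` minimizes the maximum cost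
over all feasible edges, and its maximum cost equals
`(1/2)·[1 + (1-k)x_r + k(1-2x_l) - (1-k)y_l]`, assuming `1 - y_r ≥ x_l`. -/
theorem stmt_4 (k o xl xr yl yr : ℝ)
    (hk0 : 0 ≤ k) (hk1 : k < 1) (ho0 : 0 < o) (ho1 : o < 1)
    (hxl0 : 0 ≤ xl) (hxlr : xl ≤ xr) (hxro : xr < o)
    (hoyl : o < yl) (hylr : yl ≤ yr) (hyr1 : yr ≤ 1)
    (hyx : 1 - yr ≥ xl)
    (ha : 0 ≤ (xl + xr) / 2 ∧ (xl + xr) / 2 < o)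
    (hb : o < (yl - xl) / 2 + 1 / 2 ∧ (yl - xl) / 2 + 1 / 2 ≤ 1) :
    (∀ a b, 0 ≤ a → a < o → o < b → b ≤ 1 →
      max (max (|xl - (xl + xr) / 2| + k * (((yl - xl) / 2 + 1 / 2) - (xl + xr) / 2)
            + (1 - ((yl - xl) / 2 + 1 / 2)))
          (|xr - (xl + xr) / 2| + k * (((yl - xl) / 2 + 1 / 2) - (xl + xr) / 2)
            + (1 - ((yl - xl) / 2 + 1 / 2))))
        (max (|yl - ((yl - xl) / 2 + 1 / 2)| + k * (((yl - xl) / 2 + 1 / 2) - (xl + xr) / 2)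
            + (xl + xr) / 2)
          (|yr - ((yl - xl) / 2 + 1 / 2)| + k * (((yl - xl) / 2 + 1 / 2) - (xl + xr) / 2)
            + (xl + xr) / 2))
      ≤ max (max (|xl - a| + k * (b - a) + (1 - b)) (|xr - a| + k * (b - a) + (1 - b)))
            (max (|yl - b| + k * (b - a) + a) (|yr - b| + k * (b - a) + a)))
    ∧ (max (max (|xl - (xl + xr) / 2| + k * (((yl - xl) / 2 + 1 / 2) - (xl + xr) / 2)
            + (1 - ((yl - xl) / 2 + 1 / 2)))
          (|xr - (xl + xr) / 2| + k * (((yl - xl) / 2 + 1 / 2) - (xl + xr) / 2)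
            + (1 - ((yl - xl) / 2 + 1 / 2))))
        (max (|yl - ((yl - xl) / 2 + 1 / 2)| + k * (((yl - xl) / 2 + 1 / 2) - (xl + xr) / 2)
            + (xl + xr) / 2)
          (|yr - ((yl - xl) / 2 + 1 / 2)| + k * (((yl - xl) / 2 + 1 / 2) - (xl + xr) / 2)
            + (xl + xr) / 2))
      = 1 / 2 * (1 + (1 - k) * xr + k * (1 - 2 * xl) - (1 - k) * yl)) := by
  have e1 : |xl - (xl + xr) / 2| = (xr - xl) / 2 := by
    rw [abs_of_nonpos (by linarith)]; ring
  have e2 : |xr - (xl + xr) / 2| = (xr - xl) / 2 := by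
    rw [abs_of_nonneg (by linarith)]; ring
  have e3 : |yl - ((yl - xl) / 2 + 1 / 2)| = (1 - xl - yl) / 2 := by
    rw [abs_of_nonpos (by linarith)]; ring
  have e4 : |yr - ((yl - xl) / 2 + 1 / 2)| ≤ (1 - xl - yl) / 2 := by
    rw [abs_le]; constructor <;> linarith
  have hM : max (max (|xl - (xl + xr) / 2| + k * (((yl - xl) / 2 + 1 / 2) - (xl + xr) / 2)
            + (1 - ((yl - xl) / 2 + 1 / 2)))
          (|xr - (xl + xr) / 2| + k * (((yl - xl) / 2 + 1 / 2) - (xl + xr) / 2)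
            + (1 - ((yl - xl) / 2 + 1 / 2))))
        (max (|yl - ((yl - xl) / 2 + 1 / 2)| + k * (((yl - xl) / 2 + 1 / 2) - (xl + xr) / 2)
            + (xl + xr) / 2)
          (|yr - ((yl - xl) / 2 + 1 / 2)| + k * (((yl - xl) / 2 + 1 / 2) - (xl + xr) / 2)
            + (xl + xr) / 2))
      = 1 / 2 * (1 + (1 - k) * xr + k * (1 - 2 * xl) - (1 - k) * yl) := by
    rw [e1, e2, e3, max_self]
    have h43 : |yr - ((yl - xl) / 2 + 1 / 2)| + k * ((yl - xl) / 2 + 1 / 2 - (xl + xr) / 2)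
        + (xl + xr) / 2 ≤ (1 - xl - yl) / 2 + k * ((yl - xl) / 2 + 1 / 2 - (xl + xr) / 2)
        + (xl + xr) / 2 := by linarith
    rw [max_eq_left h43, max_eq_left (by linarith)]
    ring
  refine ⟨?_, hM⟩
  intro a b ha0 hao hob hb1
  rw [hM]
  have h1 : a - xl ≤ |xl - a| := by
    have := neg_le_abs (xl - a); linarith
  have h2 : xr - a ≤ |xr - a| := le_abs_self _
  have h3 : b - yl ≤ |yl - b| := by
    have := neg_le_abs (yl - b); linarith
  set R := max (max (|xl - a| + k * (b - a) + (1 - b)) (|xr - a| + k * (b - a) + (1 - b)))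
            (max (|yl - b| + k * (b - a) + a) (|yr - b| + k * (b - a) + a)) with hR
  have r1 : |xl - a| + k * (b - a) + (1 - b) ≤ R :=
    le_trans (le_max_left _ _) (le_max_left _ _)
  have r2 : |xr - a| + k * (b - a) + (1 - b) ≤ R :=
    le_trans (le_max_right _ _) (le_max_left _ _)
  have r3 : |yl - b| + k * (b - a) + a ≤ R :=
    le_trans (le_max_left _ _) (le_max_right _ _)
  have hk2 : (0:ℝ) ≤ (1 - k) / 2 := by linarith
  have key : 1 / 2 * (1 + (1 - k) * xr + k * (1 - 2 * xl) - (1 - k) * yl)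
      ≤ k * (|xl - a| + k * (b - a) + (1 - b))
        + (1 - k) / 2 * (|xr - a| + k * (b - a) + (1 - b))
        + (1 - k) / 2 * (|yl - b| + k * (b - a) + a) := by
    nlinarith [mul_le_mul_of_nonneg_left h1 hk0, mul_le_mul_of_nonneg_left h2 hk2,
      mul_le_mul_of_nonneg_left h3 hk2]
  have hsum : k * (|xl - a| + k * (b - a) + (1 - b))
        + (1 - k) / 2 * (|xr - a| + k * (b - a) + (1 - b))
        + (1 - k) / 2 * (|yl - b| + k * (b - a) + a) ≤ R := by
    nlinarith [mul_le_mul_of_nonneg_left r1 hk0, mul_le_mul_of_nonneg_left r2 hk2,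
      mul_le_mul_of_nonneg_left r3 hk2]
  linarith
end

section
/- Let k ∈ [0,1), L ∈ [0,1), and let x_l ≤ x_r < o ≤ o + L < y_l ≤ y_r in [0,1] with 1 - y_r ≥ x_l and y_l ≥ x_r + L. Then the maximum cost of the edge (x_r, y_l), which is attained by the agent at x_l and equals x_r - x_l + k(y_l - x_r) + 1 - y_l, is at most (2 - 2(1-k)L)/(1 + k - (1-k)L) times the optimal maximum cost 1/2 · [1 + (1-k)x_r + k(1-2x_l) - (1-k)y_l]. -/
/-- The maximum cost of the edge `(x_r, y_l)`, namely `x_r - x_l + k(y_l - x_r) + 1 - y_l`,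
is at most `(2 - 2(1-k)L)/(1 + k - (1-k)L)` times the optimal maximum cost
`(1/2)[1 + (1-k)x_r + k(1-2x_l) - (1-k)y_l]`. -/
theorem stmt_5 (k L o xl xr yl yr : ℝ)
    (hk0 : 0 ≤ k) (hk1 : k < 1) (hL0 : 0 ≤ L) (hL1 : L < 1)
    (hxl0 : 0 ≤ xl) (hxlr : xl ≤ xr) (hxro : xr < o)
    (hoL : o + L < yl) (hylr : yl ≤ yr) (hyr1 : yr ≤ 1)
    (hyx : 1 - yr ≥ xl) (hylL : yl ≥ xr + L) :
    xr - xl + k * (yl - xr) + 1 - yl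
      ≤ (2 - 2 * (1 - k) * L) / (1 + k - (1 - k) * L)
        * (1 / 2 * (1 + (1 - k) * xr + k * (1 - 2 * xl) - (1 - k) * yl)) := by
  have hD : 0 < 1 + k - (1 - k) * L := by nlinarith
  rw [div_mul_eq_mul_div, le_div_iff₀ hD]
  have h1 : yl ≤ 1 - xl := by linarith
  have hk1' : (0:ℝ) ≤ 1 - k := by linarith
  have hc : (0:ℝ) ≤ 1 - L + 2 * k * L := by nlinarith
  nlinarith [mul_nonneg (mul_nonneg hk1' hc) hxl0,
    mul_nonneg (mul_nonneg hk1' hk0) (by linarith : (0:ℝ) ≤ yl - xr - L),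
    mul_nonneg (mul_nonneg (mul_nonneg hk1' hc) hk0) hxl0,
    mul_nonneg hk1' (sub_nonneg.2 h1)]
end

section
/- For k ∈ [0,1) and any a ∈ [0,1], we have max( (a + k(1-a)) / (a/2 + k(1 - a/2)), 2(max(a,1-a) + k(1-a))/(1+k) ) ≥ 2/(1+√k). Consequently, the minimum over a ∈ [0,1] of this maximum equals at least 2/(1+√k). -/
/-- Lower-bound inequality: for every `k ∈ [0,1)` and `a ∈ [0,1]`,
`max((a + k(1-a))/(a/2 + k(1-a/2)), 2(max(a,1-a) + k(1-a))/(1+k)) ≥ 2/(1+√k)`. -/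
theorem stmt_6 (k a : ℝ) (hk0 : 0 ≤ k) (hk1 : k < 1) (ha0 : 0 ≤ a) (ha1 : a ≤ 1) :
    max ((a + k * (1 - a)) / (a / 2 + k * (1 - a / 2)))
        (2 * (max a (1 - a) + k * (1 - a)) / (1 + k))
      ≥ 2 / (1 + Real.sqrt k) := by
  set s := Real.sqrt k with hs
  have hs0 : 0 ≤ s := Real.sqrt_nonneg k
  have hsk : s * s = k := Real.mul_self_sqrt hk0
  have hs1 : s < 1 := by nlinarith
  have hden : (0:ℝ) < 1 + s := by linarith
  have hk1' : (0:ℝ) < 1 + k := by linarith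
  rcases le_or_gt a (s / (1 + s)) with hcase | hcase
  · -- use the second term
    have ha' : a * (1 + s) ≤ s := (le_div_iff₀ hden).mp hcase
    refine le_trans ?_ (le_max_right _ _)
    have hmax : max a (1 - a) = 1 - a := max_eq_right (by nlinarith)
    rw [hmax, div_le_div_iff₀ hden hk1']
    nlinarith [mul_nonneg (by linarith : (0:ℝ) ≤ 1 + k)
      (by linarith : (0:ℝ) ≤ s - a * (1 + s))]
  · -- use the first term
    have ha' : s < a * (1 + s) := (div_lt_iff₀ hden).mp hcase
    have hapos : 0 < a := by nlinarith
    have hd : (0:ℝ) < a / 2 + k * (1 - a / 2) := by nlinarith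
    refine le_trans ?_ (le_max_left _ _)
    rw [div_le_div_iff₀ hden hd]
    have key : 0 ≤ s * (a * (1 - k) - s * (1 - s)) := by
      apply mul_nonneg hs0
      nlinarith [mul_nonneg (by linarith : (0:ℝ) ≤ a * (1 + s) - s)
        (by linarith : (0:ℝ) ≤ 1 - s)]
    nlinarith [key, hsk]
end

section
/- For k ∈ (0,1) and L ∈ [0,1], define a₀ = ( −k[(1−k)L + 2(1+k)] + √( k²[(1−k)L + 2(1+k)]² + 4(1+k)²(1−k)k(1−L) ) ) / (2(1+k)(1−k)). Then a₀ ≤ (1−L)/2. -/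
/-- The balancing point `a₀` of the two lower-bound expressions satisfies `a₀ ≤ (1-L)/2`. -/
theorem stmt_9 (k L : ℝ) (hk0 : 0 < k) (hk1 : k < 1) (hL0 : 0 ≤ L) (hL1 : L ≤ 1) :
    (-(k * ((1 - k) * L + 2 * (1 + k)))
        + Real.sqrt (k ^ 2 * ((1 - k) * L + 2 * (1 + k)) ^ 2
            + 4 * (1 + k) ^ 2 * (1 - k) * k * (1 - L)))
      / (2 * (1 + k) * (1 - k))
    ≤ (1 - L) / 2 := by
  have hD : (0:ℝ) < 2 * (1 + k) * (1 - k) := by nlinarith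
  rw [div_le_div_iff₀ hD (by norm_num)]
  have hC : (0:ℝ) ≤ k * ((1 - k) * L + 2 * (1 + k)) + (1 + k) * (1 - k) * (1 - L) := by
    nlinarith
  have hsq : Real.sqrt (k ^ 2 * ((1 - k) * L + 2 * (1 + k)) ^ 2
      + 4 * (1 + k) ^ 2 * (1 - k) * k * (1 - L))
      ≤ k * ((1 - k) * L + 2 * (1 + k)) + (1 + k) * (1 - k) * (1 - L) := by
    rw [show k ^ 2 * ((1 - k) * L + 2 * (1 + k)) ^ 2
      + 4 * (1 + k) ^ 2 * (1 - k) * k * (1 - L) =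
      (k * ((1 - k) * L + 2 * (1 + k)) + (1 + k) * (1 - k) * (1 - L)) ^ 2
      - (1 - k) ^ 2 * (1 + k) * (1 - L) * ((1 + k) + (k - 1) * L) by ring]
    calc Real.sqrt _ ≤ Real.sqrt ((k * ((1 - k) * L + 2 * (1 + k))
          + (1 + k) * (1 - k) * (1 - L)) ^ 2) := by
          apply Real.sqrt_le_sqrt
          have h1 : (0:ℝ) ≤ 1 + k + (k - 1) * L := by nlinarith
          have h2 : (0:ℝ) ≤ (1 - k) ^ 2 * (1 + k) * (1 - L) * (1 + k + (k - 1) * L) := by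
            have h3 : (0:ℝ) ≤ (1 - k) ^ 2 * (1 + k) := by nlinarith [sq_nonneg (1-k)]
            have h4 : (0:ℝ) ≤ (1 - L) * (1 + k + (k - 1) * L) := mul_nonneg (by linarith) h1
            calc (0:ℝ) ≤ ((1 - k) ^ 2 * (1 + k)) * ((1 - L) * (1 + k + (k - 1) * L)) := mul_nonneg h3 h4
              _ = (1 - k) ^ 2 * (1 + k) * (1 - L) * (1 + k + (k - 1) * L) := by ring
          linarith
      _ = _ := Real.sqrt_sq hC
  nlinarith [hsq]
end

section
/- Let k ∈ [0,1) and p = max((1+k)/(3−k), (k+k²)/(1+k²)). Then 1 + max( p(1−k)/(1+k), (1−p)k ) ≤ max( (4−2k)/(3−k), (1+k)/(1+k²) ). -/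
/-- With `p = max((1+k)/(3-k), (k+k²)/(1+k²))`,
`1 + max(p(1-k)/(1+k), (1-p)k) ≤ max((4-2k)/(3-k), (1+k)/(1+k²))`. -/
theorem stmt_11 (k : ℝ) (hk0 : 0 ≤ k) (hk1 : k < 1) :
    let p := max ((1 + k) / (3 - k)) ((k + k ^ 2) / (1 + k ^ 2))
    1 + max (p * (1 - k) / (1 + k)) ((1 - p) * k)
      ≤ max ((4 - 2 * k) / (3 - k)) ((1 + k) / (1 + k ^ 2)) := by
  intro p
  have h3 : (0:ℝ) < 3 - k := by linarith
  have h1k : (0:ℝ) < 1 + k := by linarith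
  have hk2 : (0:ℝ) < 1 + k ^ 2 := by positivity
  rcases le_total ((k + k ^ 2) / (1 + k ^ 2)) ((1 + k) / (3 - k)) with h | h
  · have hp : p = (1 + k) / (3 - k) := max_eq_left h
    have hcase : (k + k ^ 2) * (3 - k) ≤ (1 + k) * (1 + k ^ 2) :=
      (div_le_div_iff₀ hk2 h3).mp h
    -- in this case k ≤ 1/2 essentially
    have hb : 1 + max (p * (1 - k) / (1 + k)) ((1 - p) * k) ≤ (4 - 2 * k) / (3 - k) := by
      have h1 : p * (1 - k) / (1 + k) = (1 - k) / (3 - k) := by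
        rw [hp]; field_simp
      have h2 : (1 - p) * k = (2 - 2 * k) * k / (3 - k) := by
        rw [hp, one_sub_div h3.ne', div_mul_eq_mul_div, div_eq_div_iff h3.ne' h3.ne']; ring
      rw [h1, h2]
      have hk12 : 2 * k ^ 2 - 3 * k + 1 ≥ 0 := by nlinarith
      rcases max_cases ((1 - k) / (3 - k)) ((2 - 2 * k) * k / (3 - k)) with ⟨he, _⟩ | ⟨he, _⟩ <;>
        rw [he, le_div_iff₀ h3, add_mul, div_mul_cancel₀ _ h3.ne'] <;> nlinarith
    exact hb.trans (le_max_left _ _)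
  · have hp : p = (k + k ^ 2) / (1 + k ^ 2) := max_eq_right h
    have hb : 1 + max (p * (1 - k) / (1 + k)) ((1 - p) * k) ≤ (1 + k) / (1 + k ^ 2) := by
      have h1 : p * (1 - k) / (1 + k) = k * (1 - k) / (1 + k ^ 2) := by
        rw [hp]; field_simp
      have h2 : (1 - p) * k = (1 - k) * k / (1 + k ^ 2) := by
        rw [hp, one_sub_div hk2.ne', div_mul_eq_mul_div, div_eq_div_iff hk2.ne' hk2.ne']; ring
      rw [h1, h2]
      rcases max_cases (k * (1 - k) / (1 + k ^ 2)) ((1 - k) * k / (1 + k ^ 2)) with ⟨he, _⟩ | ⟨he, _⟩ <;>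
        rw [he, le_div_iff₀ hk2, add_mul, div_mul_cancel₀ _ hk2.ne'] <;> nlinarith
    exact hb.trans (le_max_right _ _)
end

section
/- Let k ∈ [0,1), c ∈ [0,1], o ∈ [0,1], and suppose 0 ≤ x_l ≤ min(o, 1−o). Then (o − 2o(1−c) + 1 − (1−k)c) / (1 + (1−k)o + k(1 − 2·min(o,1−o)) − (1−k)(o + c(1−o))) ≤ max( (1−(1−k)c)/(1+k−(1−k)c), (1+2ck)/(2−(1−k)c), c ), provided the denominator is positive. -/
/-- Case-2 bound (cost at `x_r`) in the analysis of the TwoExtremeRestrict mechanism. -/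
theorem stmt_15 (k c o : ℝ)
    (hk0 : 0 ≤ k) (hk1 : k < 1) (hc0 : 0 ≤ c) (hc1 : c ≤ 1)
    (ho0 : 0 ≤ o) (ho1 : o ≤ 1)
    (hden : 0 < 1 + (1 - k) * o + k * (1 - 2 * min o (1 - o)) - (1 - k) * (o + c * (1 - o))) :
    (o - 2 * o * (1 - c) + 1 - (1 - k) * c)
        / (1 + (1 - k) * o + k * (1 - 2 * min o (1 - o)) - (1 - k) * (o + c * (1 - o)))
      ≤ max (max ((1 - (1 - k) * c) / (1 + k - (1 - k) * c))
              ((1 + 2 * c * k) / (2 - (1 - k) * c))) c := by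
  set m := max (max ((1 - (1 - k) * c) / (1 + k - (1 - k) * c))
              ((1 + 2 * c * k) / (2 - (1 - k) * c))) c with hm
  have hdenB : (0:ℝ) < 2 - (1 - k) * c := by nlinarith
  have hA : (1 - (1 - k) * c) / (1 + k - (1 - k) * c) ≤ m :=
    le_max_of_le_left (le_max_left _ _)
  have hB : (1 + 2 * c * k) / (2 - (1 - k) * c) ≤ m :=
    le_max_of_le_left (le_max_right _ _)
  have hC : c ≤ m := le_max_right _ _
  have hmc : 0 ≤ m := le_trans hc0 hC
  have hA' : 1 - (1 - k) * c ≤ m * (1 + k - (1 - k) * c) := by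
    rcases eq_or_lt_of_le (by nlinarith : (0:ℝ) ≤ 1 + k - (1 - k) * c) with he | hdenA
    · nlinarith
    · rw [div_le_iff₀ hdenA] at hA; linarith
  have hB' : 1 + 2 * c * k ≤ m * (2 - (1 - k) * c) := by
    rw [div_le_iff₀ hdenB] at hB; linarith
  rw [div_le_iff₀ hden]
  rcases le_total o (1 - o) with h | h
  · rw [min_eq_left h]
    rw [min_eq_left h] at hden
    nlinarith [mul_nonneg ho0 (sub_nonneg.2 hB'), mul_nonneg (by linarith : (0:ℝ) ≤ 1 - 2 * o) (sub_nonneg.2 hA')]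
  · rw [min_eq_right h]
    rw [min_eq_right h] at hden
    have hC' : c * (1 + k) ≤ m * (1 + k) := by nlinarith
    nlinarith [mul_nonneg (by linarith : (0:ℝ) ≤ 2 - 2 * o) (sub_nonneg.2 hB'), mul_nonneg (by linarith : (0:ℝ) ≤ 2 * o - 1) (sub_nonneg.2 hC')]
end

section
/- For every k ∈ [0,1), max( (4−2k)/(3−k), (11+2k³−9k²)/(9+k²−6k) ) ≤ 9 − 6·2^(1/3), with equality attainable at k = 3 − 2·2^(1/3). -/
/-- The worst-case approximation ratio of the alternative randomized mechanism:
`max((4-2k)/(3-k), (11+2k³-9k²)/(9+k²-6k)) ≤ 9 - 6·∛2` for all `k ∈ [0,1)`,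
with equality at `k = 3 - 2·∛2`. -/
theorem stmt_18 :
    (∀ k : ℝ, 0 ≤ k → k < 1 →
      max ((4 - 2 * k) / (3 - k))
          ((11 + 2 * k ^ 3 - 9 * k ^ 2) / (9 + k ^ 2 - 6 * k))
        ≤ 9 - 6 * (2 : ℝ) ^ ((1 : ℝ) / 3))
    ∧ (let k := 3 - 2 * (2 : ℝ) ^ ((1 : ℝ) / 3)
       max ((4 - 2 * k) / (3 - k))
           ((11 + 2 * k ^ 3 - 9 * k ^ 2) / (9 + k ^ 2 - 6 * k))
         = 9 - 6 * (2 : ℝ) ^ ((1 : ℝ) / 3)) := by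
  set c : ℝ := (2 : ℝ) ^ ((1 : ℝ) / 3) with hc
  have hcpos : 0 < c := Real.rpow_pos_of_pos (by norm_num) _
  have hc3 : c ^ 3 = 2 := by
    rw [hc, ← Real.rpow_natCast ((2:ℝ) ^ ((1:ℝ)/3)) 3, ← Real.rpow_mul (by norm_num)]
    norm_num
  have hclb : (5:ℝ)/4 < c := by nlinarith [sq_nonneg (c - 5/4), sq_nonneg c]
  have hcub : c < (127:ℝ)/100 := by nlinarith [sq_nonneg (c - 127/100), sq_nonneg c]
  have h1 : ∀ k : ℝ, 0 ≤ k → k < 1 →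
      (4 - 2 * k) / (3 - k) ≤ 9 - 6 * c := by
    intro k hk0 hk1
    rw [div_le_iff₀ (by linarith : (0:ℝ) < 3 - k)]
    nlinarith [mul_nonneg hk0 (by linarith : (0:ℝ) ≤ 6 * c - 7)]
  have h2 : ∀ k : ℝ, 0 ≤ k → k < 1 →
      (11 + 2 * k ^ 3 - 9 * k ^ 2) / (9 + k ^ 2 - 6 * k) ≤ 9 - 6 * c := by
    intro k hk0 hk1
    have hden : (0:ℝ) < 9 + k ^ 2 - 6 * k := by nlinarith [sq_nonneg (3 - k)]
    rw [div_le_iff₀ hden]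
    nlinarith [mul_nonneg (sq_nonneg (k - (3 - 2 * c)))
      (by linarith : (0:ℝ) ≤ 3 + c - k)]
  constructor
  · intro k hk0 hk1
    exact max_le (h1 k hk0 hk1) (h2 k hk0 hk1)
  · intro k
    have hk : k = 3 - 2 * c := rfl
    have hden : (9 + k ^ 2 - 6 * k) = 4 * c ^ 2 := by rw [hk]; ring
    have hne : (9 + k ^ 2 - 6 * k) ≠ 0 := by
      rw [hden]; positivity
    have hnum : 11 + 2 * k ^ 3 - 9 * k ^ 2 = (9 - 6 * c) * (9 + k ^ 2 - 6 * k) := by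
      rw [hk]; linear_combination 8 * hc3
    have heq : (11 + 2 * k ^ 3 - 9 * k ^ 2) / (9 + k ^ 2 - 6 * k) = 9 - 6 * c := by
      rw [hnum, mul_div_assoc, div_self hne, mul_one]
    rw [heq]
    apply max_eq_right
    rw [heq] at *
    have hk0 : (0:ℝ) ≤ k := by rw [hk]; linarith
    have hk1 : k < 1 := by rw [hk]; linarith
    rw [div_le_iff₀ (by rw [hk]; linarith : (0:ℝ) < 3 - k)]
    nlinarith [mul_nonneg hk0 (by linarith : (0:ℝ) ≤ 6 * c - 7)]
end
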